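/- Let k be a perfect field of characteristic p, E irreducible of height h and degree d with root f ∈ k[[t]], E_y(t,f) ≠ 0. If P ∈ k[t,y] satisfies deg_t P ≤ h and deg_y P ≤ d-2, then for every 0 ≤ r < p, Λ_{r,p-1}(P·E^{p-1}) has y-degree at most d-2; i.e., the subspace { Q(t,f)/E_y(t,f) : deg_t Q < h, deg_y Q ≤ d-2 } is stable under all section operators Λ_r. -/

import Mathlib

noncomputable section

/-- The canonical map `k[t] →+* k⟦t⟧`. -/
def polyToSeries (k : Type*) [Field k] : Polynomial k →+* PowerSeries k :=
  Polynomial.eval₂RingHom (PowerSeries.C (R := k)) PowerSeries.X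

/-- The canonical map `k[t] →+* k((t))`. -/
def polyToLaurent (k : Type*) [Field k] : Polynomial k →+* LaurentSeries k :=
  (HahnSeries.ofPowerSeries ℤ k).comp (polyToSeries k)

/-- `t` inside `k((t))`. -/
def tL (k : Type*) [Field k] : LaurentSeries k := HahnSeries.single (1 : ℤ) (1 : k)

/-- Evaluation of `P ∈ k[t][y]` at `y = f` inside `k((t))`. -/
def evalAt (k : Type*) [Field k] (f : PowerSeries k) (P : Polynomial (Polynomial k)) :
    LaurentSeries k :=
  Polynomial.eval₂ (polyToLaurent k) (HahnSeries.ofPowerSeries ℤ k f) P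

/-!
Write `G = Q E ^ (p - 1)` in base `y ^ p` and let `G'` be its last digit. If `E = (y - f) u` and
`Q u ^ (p - 1) = (y - f) W + c`, then `G = (y ^ p - f ^ p) W + c (y - f) ^ (p - 1)`, whence
`G'(f ^ p) = c = Q(f) E_y(f) ^ (p - 1)`. Taking `p`-th roots of the `t`-digits of the coefficients of
`G'` over the perfect field `k` gives `Q(f) / E_y(f) = ∑ r, t ^ r (Q_r(f) / E_y(f)) ^ p`, and such a
decomposition of an element of `k((t))` is unique, so `Λ_r (Q(f) / E_y(f)) = Q_r(f) / E_y(f)`.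
Since `G` has `y`-degree at most `pd - 2 < p (d - 1) + (p - 1)` and `t`-degree below `ph`, the
`Q_r` have `y`-degree at most `d - 2` and `t`-degree below `h`.
-/

open Polynomial Finset

namespace Polynomial

section Digit

variable {R : Type*} [CommSemiring R] {p s : ℕ}

/-- The `s`-th digit of `A` in base `X ^ p` (see `sum_X_pow_mul_expand_digit`). -/
def digit (p s : ℕ) (A : R[X]) : R[X] :=
  ∑ m ∈ range (A.natDegree + 1), monomial m (A.coeff (m * p + s))

theorem coeff_digit (hp : p ≠ 0) (A : R[X]) (m : ℕ) :
    (digit p s A).coeff m = A.coeff (m * p + s) := by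
  simp only [digit, finsetSum_coeff, coeff_monomial, sum_ite_eq', mem_range]
  split_ifs with hm
  · rfl
  · refine (coeff_eq_zero_of_natDegree_lt ?_).symm
    nlinarith [Nat.one_le_iff_ne_zero.mpr hp]

theorem digit_add (hp : p ≠ 0) (A B : R[X]) :
    digit p s (A + B) = digit p s A + digit p s B := by
  ext m; simp [coeff_digit hp]

theorem digit_C_mul (hp : p ≠ 0) (a : R) (A : R[X]) :
    digit p s (C a * A) = C a * digit p s A := by
  ext m; simp [coeff_digit hp]

theorem digit_zero (p s : ℕ) : digit p s (0 : R[X]) = 0 := by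
  simp [digit]

theorem digit_X_pow_mul_pow_mul (hs : s < p) (n : ℕ) (A : R[X]) :
    digit p s (X ^ (n * p) * A) = X ^ n * digit p s A := by
  have hp : p ≠ 0 := by omega
  ext m
  rw [coeff_digit hp, coeff_X_pow_mul', coeff_X_pow_mul']
  by_cases hnm : n ≤ m
  · rw [if_pos (by nlinarith), if_pos hnm, coeff_digit hp]
    congr 1
    rw [Nat.sub_mul]
    have : n * p ≤ m * p := Nat.mul_le_mul_right p hnm
    omega
  · rw [if_neg (by nlinarith), if_neg hnm]

theorem digit_expand_mul (hs : s < p) (B A : R[X]) :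
    digit p s (expand R p B * A) = B * digit p s A := by
  have hp : p ≠ 0 := by omega
  induction B using Polynomial.induction_on' with
  | add B B' hB hB' => rw [map_add, add_mul, digit_add hp, hB, hB', add_mul]
  | monomial n a =>
    rw [expand_monomial, ← C_mul_X_pow_eq_monomial, ← C_mul_X_pow_eq_monomial, mul_assoc,
      digit_C_mul hp, digit_X_pow_mul_pow_mul hs, mul_assoc]

theorem digit_eq_C_coeff {A : R[X]} (hA : A.natDegree < p) :
    digit p s A = C (A.coeff s) := by
  ext m
  rw [coeff_digit (by omega), coeff_C]
  split_ifs with hm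
  · simp [hm]
  · exact coeff_eq_zero_of_natDegree_lt (by nlinarith [Nat.one_le_iff_ne_zero.mpr hm])

theorem digit_map {S : Type*} [CommSemiring S] (f : R →+* S) (hp : p ≠ 0) (A : R[X]) :
    digit p s (A.map f) = (digit p s A).map f := by
  ext m; simp [coeff_digit hp]

theorem sum_X_pow_mul_expand_digit (hp : p ≠ 0) (A : R[X]) :
    ∑ s ∈ range p, X ^ s * expand R p (digit p s A) = A := by
  ext n
  simp only [finsetSum_coeff, coeff_X_pow_mul', coeff_expand (Nat.pos_of_ne_zero hp)]
  rw [sum_eq_single (n % p)]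
  · rw [if_pos (Nat.mod_le n p), if_pos (Nat.dvd_sub_mod n), coeff_digit hp, Nat.div_mul_cancel
      (Nat.dvd_sub_mod n), Nat.sub_add_cancel (Nat.mod_le n p)]
  · intro s hs hsn
    rw [mem_range] at hs
    split_ifs with _ hdvd
    · obtain ⟨q, hq⟩ := hdvd
      refine absurd ?_ hsn
      rw [show n = s + p * q by omega, Nat.add_mul_mod_self_left, Nat.mod_eq_of_lt hs]
    all_goals rfl
  · simp [Nat.mod_lt n (Nat.pos_of_ne_zero hp)]

theorem degree_digit_lt (hp : p ≠ 0) {A : R[X]} {n : ℕ} (hA : A.degree < ↑(n * p + s)) :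
    (digit p s A).degree < n := by
  rw [degree_lt_iff_coeff_zero]
  intro m hm
  rw [coeff_digit hp]
  exact coeff_eq_zero_of_degree_lt (hA.trans_le (by exact_mod_cast by nlinarith))

end Digit

section Key

variable {R : Type*} [CommRing R] {p : ℕ} [ExpChar R p]

theorem X_sub_C_pow_eq_expand (α : R) : (X - C α) ^ p = expand R p (X - C (α ^ p)) := by
  rw [sub_pow_expChar, map_sub, expand_X, expand_C, C_pow]

theorem eval_digit_X_sub_C_pow_mul (α : R) (A : R[X]) :
    (digit p (p - 1) ((X - C α) ^ (p - 1) * A)).eval (α ^ p) = A.eval α := by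
  nontriviality R
  have hp : 0 < p := expChar_pos R p
  set c := A.eval α
  obtain ⟨W, hW⟩ : X - C α ∣ A - C c := dvd_iff_isRoot.mpr (by simp [c])
  have hdecomp : (X - C α) ^ (p - 1) * A
      = expand R p (X - C (α ^ p)) * W + C c * (X - C α) ^ (p - 1) := by
    rw [← X_sub_C_pow_eq_expand, eq_add_of_sub_eq hW]
    nth_rewrite 2 [← Nat.sub_add_cancel hp]
    ring
  have hdeg : ((X - C α) ^ (p - 1)).natDegree = p - 1 := by
    rw [(monic_X_sub_C α).natDegree_pow, natDegree_X_sub_C, mul_one]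
  have hlast : digit p (p - 1) ((X - C α) ^ (p - 1)) = 1 := by
    rw [digit_eq_C_coeff (by omega)]
    nth_rewrite 2 [← hdeg]
    rw [((monic_X_sub_C α).pow (p - 1)).coeff_natDegree, C_1]
  rw [hdecomp, digit_add hp.ne', digit_expand_mul (by omega), digit_C_mul hp.ne', hlast]
  simp

theorem eval_digit_mul_pow_sub_one {E : R[X]} {α : R} (hE : E.IsRoot α) (Q : R[X]) :
    (digit p (p - 1) (Q * E ^ (p - 1))).eval (α ^ p)
      = Q.eval α * (derivative E).eval α ^ (p - 1) := by
  obtain ⟨u, rfl⟩ := dvd_iff_isRoot.mpr hE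
  rw [mul_pow, mul_left_comm, eval_digit_X_sub_C_pow_mul]
  simp [derivative_mul]

end Key

section Perfect

variable {R : Type*} [CommSemiring R] (p : ℕ) [ExpChar R p] [PerfectRing R p]

def rootDigit (s : ℕ) (A : R[X]) : R[X] :=
  (digit p s A).map (frobeniusEquiv R p).symm

theorem rootDigit_pow (s : ℕ) (A : R[X]) : rootDigit p s A ^ p = expand R p (digit p s A) := by
  rw [rootDigit, ← map_frobenius_expand, map_expand, map_map,
    frobenius_comp_frobeniusEquiv_symm, map_id]

theorem sum_X_pow_mul_rootDigit_pow (A : R[X]) :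
    ∑ s ∈ range p, X ^ s * rootDigit p s A ^ p = A := by
  simp only [rootDigit_pow]
  exact sum_X_pow_mul_expand_digit (expChar_pos R p).ne' A

theorem rootDigit_zero (s : ℕ) : rootDigit p s (0 : R[X]) = 0 := by
  rw [rootDigit, digit_zero, Polynomial.map_zero]

def rootDigitCoeffs (s : ℕ) (B : R[X][X]) : R[X][X] :=
  ∑ m ∈ range (B.natDegree + 1), monomial m (rootDigit p s (B.coeff m))

theorem coeff_rootDigitCoeffs (s : ℕ) (B : R[X][X]) (m : ℕ) :
    (rootDigitCoeffs p s B).coeff m = rootDigit p s (B.coeff m) := by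
  simp only [rootDigitCoeffs, finsetSum_coeff, coeff_monomial, sum_ite_eq', mem_range]
  split_ifs with hm
  · rfl
  · rw [coeff_eq_zero_of_natDegree_lt (by omega), rootDigit_zero]

theorem expand_eq_sum_C_X_pow_mul_rootDigitCoeffs_pow (B : R[X][X]) :
    expand R[X] p B = ∑ s ∈ range p, C (X ^ s) * rootDigitCoeffs p s B ^ p := by
  have hp : 0 < p := expChar_pos R p
  ext1 n
  simp only [finsetSum_coeff, coeff_C_mul, ← map_frobenius_expand, coeff_map,
    coeff_expand hp, coeff_rootDigitCoeffs]
  split_ifs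
  · simp only [frobenius_def, sum_X_pow_mul_rootDigit_pow]
  · simp

end Perfect

section Decomposition

variable {R S : Type*} [CommSemiring R] [CommRing S] {p : ℕ} [ExpChar R p] [PerfectRing R p]
  [ExpChar S p]

theorem degree_rootDigit_lt {s n : ℕ} {A : R[X]} (hA : A.degree < ↑(n * p)) :
    (rootDigit p s A).degree < n :=
  (degree_map_le).trans_lt <| degree_digit_lt (expChar_pos R p).ne' <|
    hA.trans_le (by exact_mod_cast Nat.le_add_right _ _)

theorem degree_rootDigitCoeffs_le (s : ℕ) (B : R[X][X]) :
    (rootDigitCoeffs p s B).degree ≤ B.degree := by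
  rw [degree_le_iff_coeff_zero]
  intro m hm
  rw [coeff_rootDigitCoeffs, coeff_eq_zero_of_degree_lt hm, rootDigit_zero]

theorem eval₂_mul_eval₂_derivative_pow_eq_sum (φ : R[X] →+* S) {E : R[X][X]} {α : S}
    (hE : E.eval₂ φ α = 0) (Q : R[X][X]) :
    Q.eval₂ φ α * (derivative E).eval₂ φ α ^ (p - 1)
      = ∑ s ∈ range p, φ X ^ s
          * (rootDigitCoeffs p s (digit p (p - 1) (Q * E ^ (p - 1)))).eval₂ φ α ^ p := by
  have hp : p ≠ 0 := (expChar_pos R p).ne'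
  have hroot : (E.map φ).IsRoot α := by rwa [IsRoot, eval_map]
  rw [← eval_map, ← eval_map, ← derivative_map, ← eval_digit_mul_pow_sub_one hroot,
    ← Polynomial.map_pow, ← Polynomial.map_mul, digit_map φ hp, eval_map, ← eval_map,
    ← expand_eval, ← map_expand, eval_map, expand_eq_sum_C_X_pow_mul_rootDigitCoeffs_pow,
    eval₂_finsetSum]
  simp only [eval₂_mul, eval₂_C, eval₂_pow, map_pow]

end Decomposition

section CoeffDegree

variable {R : Type*} [Semiring R]

theorem degree_mul_lt_of_lt_of_le {P Q : R[X]} {a b : ℕ} (hP : P.degree < a)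
    (hQ : Q.degree ≤ b) : (P * Q).degree < ↑(a + b) := by
  rcases eq_or_ne Q 0 with rfl | hQ0
  · simp
  calc (P * Q).degree ≤ P.degree + Q.degree := degree_mul_le P Q
    _ < a + b := WithBot.add_lt_add_of_lt_of_le (degree_eq_bot.not.mpr hQ0) hP hQ
    _ = ↑(a + b) := by push_cast; rfl

theorem degree_coeff_mul_le {A B : R[X][X]} {a b : ℕ} (hA : ∀ i, (A.coeff i).degree ≤ a)
    (hB : ∀ i, (B.coeff i).degree ≤ b) (n : ℕ) : ((A * B).coeff n).degree ≤ ↑(a + b) := by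
  rw [coeff_mul]
  refine (degree_sum_le _ _).trans (Finset.sup_le fun x _ => ?_)
  exact (degree_mul_le _ _).trans (by push_cast; exact add_le_add (hA x.1) (hB x.2))

theorem degree_coeff_pow_le {A : R[X][X]} {a : ℕ} (hA : ∀ i, (A.coeff i).degree ≤ a) (n i : ℕ) :
    ((A ^ n).coeff i).degree ≤ ↑(n * a) := by
  induction n generalizing i with
  | zero => rw [pow_zero, coeff_one]; split_ifs <;> simp
  | succ n ih => rw [pow_succ, add_one_mul]; exact degree_coeff_mul_le ih hA i

theorem degree_coeff_mul_lt {A B : R[X][X]} {a b : ℕ} (hA : ∀ i, (A.coeff i).degree < a)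
    (hB : ∀ i, (B.coeff i).degree ≤ b) (n : ℕ) : ((A * B).coeff n).degree < ↑(a + b) := by
  rw [coeff_mul]
  refine (degree_sum_le _ _).trans_lt ((Finset.sup_lt_iff (WithBot.bot_lt_coe _)).mpr ?_)
  exact fun x _ => degree_mul_lt_of_lt_of_le (hA x.1) (hB x.2)

theorem degree_mul_pow_sub_one_lt {Q E : R[X]} {d p : ℕ}
    (hp : p ≠ 0) (hE : E.natDegree ≤ d) (hQ : Q.degree < ↑(d - 1)) :
    (Q * E ^ (p - 1)).degree < ↑((d - 1) * p + (p - 1)) := by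
  rcases eq_or_ne Q 0 with rfl | hQ0
  · rw [zero_mul, degree_zero]
    exact WithBot.bot_lt_coe _
  have hQd := (natDegree_lt_iff_degree_lt hQ0).mpr hQ
  refine degree_le_natDegree.trans_lt (Nat.cast_lt.mpr ?_)
  calc (Q * E ^ (p - 1)).natDegree ≤ Q.natDegree + (p - 1) * d :=
        natDegree_mul_le.trans (Nat.add_le_add_left (natDegree_pow_le_of_le _ hE) _)
    _ < (d - 1) * p + (p - 1) := by
        obtain ⟨D, rfl⟩ : ∃ D, d = D + 1 := ⟨d - 1, by omega⟩
        obtain ⟨P, rfl⟩ : ∃ P, p = P + 1 := ⟨p - 1, by omega⟩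
        simp only [Nat.add_sub_cancel] at hQd ⊢
        nlinarith

end CoeffDegree

end Polynomial

namespace HahnSeries

theorem eq_zero_of_sum_eq_zero_of_injOn_order {Γ R ι : Type*} [LinearOrder Γ] [Zero Γ]
    [AddCommMonoid R] {s : Finset ι} {F : ι → HahnSeries Γ R}
    (hinj : Set.InjOn (fun i => (F i).order) {i | i ∈ s ∧ F i ≠ 0}) (hsum : ∑ i ∈ s, F i = 0) :
    ∀ i ∈ s, F i = 0 := by
  classical
  by_contra! ⟨i, hi, hFi⟩
  obtain ⟨j, hj, hmin⟩ := (s.filter (F · ≠ 0)).exists_min_image (fun i => (F i).order)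
    ⟨i, Finset.mem_filter.mpr ⟨hi, hFi⟩⟩
  rw [Finset.mem_filter] at hj
  have hcoeff := congrArg (fun x => x.coeff (F j).order) hsum
  simp only [coeff_sum, coeff_zero] at hcoeff
  rw [Finset.sum_eq_single_of_mem j hj.1 fun i hi hij => ?_] at hcoeff
  · exact hj.2 (coeff_order_eq_zero.mp hcoeff)
  by_cases hFi : F i = 0
  · simp [hFi]
  refine coeff_eq_zero_of_lt_order (lt_of_le_of_ne (hmin i (Finset.mem_filter.mpr ⟨hi, hFi⟩)) ?_)
  exact fun h => hij (hinj ⟨hj.1, hj.2⟩ ⟨hi, hFi⟩ h).symm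

end HahnSeries

theorem div_eq_sum_mul_div_pow {K ι : Type*} [Field K] {p : ℕ} (hp : p ≠ 0) {a e : K}
    (he : e ≠ 0) (s : Finset ι) (c b : ι → K) (h : a * e ^ (p - 1) = ∑ i ∈ s, c i * b i ^ p) :
    a / e = ∑ i ∈ s, c i * (b i / e) ^ p := by
  have hep : e ^ p = e * e ^ (p - 1) := by rw [← pow_succ', Nat.sub_add_cancel (by omega)]
  simp only [div_pow, ← mul_div_assoc, ← Finset.sum_div, ← h, hep]
  rw [mul_div_mul_right _ _ (pow_ne_zero _ he)]

section LaurentSeries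

variable {k : Type*} [Field k]

theorem polyToLaurent_X : polyToLaurent k Polynomial.X = tL k := by
  simp only [polyToLaurent, polyToSeries, RingHom.comp_apply, coe_eval₂RingHom, eval₂_X,
    HahnSeries.ofPowerSeries_X, tL]

theorem tL_ne_zero : tL k ≠ 0 :=
  HahnSeries.single_ne_zero one_ne_zero

instance {p : ℕ} [ExpChar k p] : ExpChar (LaurentSeries k) p :=
  expChar_of_injective_ringHom HahnSeries.C_injective p

theorem order_tL_pow_mul_pow {a : LaurentSeries k} (ha : a ≠ 0) (j n : ℕ) :
    (tL k ^ j * a ^ n).order = j + n * a.order := by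
  rw [HahnSeries.order_mul (pow_ne_zero j tL_ne_zero) (pow_ne_zero n ha), HahnSeries.order_pow,
    HahnSeries.order_pow, tL, HahnSeries.order_single one_ne_zero]
  simp

/-- The orders of the terms are pairwise distinct modulo `p`, so no cancellation can occur. -/
theorem eq_zero_of_sum_tL_pow_mul_pow_eq_zero {p : ℕ} {a : Fin p → LaurentSeries k}
    (h : ∑ j : Fin p, tL k ^ (j : ℕ) * a j ^ p = 0) : a = 0 := by
  have hne : ∀ j : Fin p, tL k ^ (j : ℕ) * a j ^ p ≠ 0 → a j ≠ 0 := fun j hj ha =>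
    hj (by rw [ha, zero_pow j.pos.ne', mul_zero])
  have hinj : Set.InjOn (fun j : Fin p => (tL k ^ (j : ℕ) * a j ^ p).order)
      {j | j ∈ Finset.univ ∧ tL k ^ (j : ℕ) * a j ^ p ≠ 0} := by
    intro i ⟨_, hi⟩ j ⟨_, hj⟩ hij
    have hmod := congrArg (· % (p : ℤ)) hij
    simp only [order_tL_pow_mul_pow (hne i hi), order_tL_pow_mul_pow (hne j hj),
      Int.add_mul_emod_self_left] at hmod
    rw [Int.emod_eq_of_lt (by positivity) (by exact_mod_cast i.isLt),
      Int.emod_eq_of_lt (by positivity) (by exact_mod_cast j.isLt)] at hmod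
    exact Fin.ext (by exact_mod_cast hmod)
  funext j
  have hj := HahnSeries.eq_zero_of_sum_eq_zero_of_injOn_order hinj h j (Finset.mem_univ j)
  exact (pow_eq_zero_iff j.pos.ne').mp
    ((mul_eq_zero.mp hj).resolve_left (pow_ne_zero _ tL_ne_zero))

theorem sum_tL_pow_mul_pow_injective {p : ℕ} [ExpChar k p] {a b : Fin p → LaurentSeries k}
    (h : ∑ j : Fin p, tL k ^ (j : ℕ) * a j ^ p = ∑ j : Fin p, tL k ^ (j : ℕ) * b j ^ p) :
    a = b := by
  refine sub_eq_zero.mp (eq_zero_of_sum_tL_pow_mul_pow_eq_zero ?_)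
  simp only [Pi.sub_apply, sub_pow_expChar, mul_sub, Finset.sum_sub_distrib, h, sub_self]

end LaurentSeries

theorem stability_degree_le_d_sub_two_general (k : Type*) [Field k] (p : ℕ) [Fact p.Prime]
    [CharP k p] [PerfectRing k p] (h d : ℕ)
    (E : Polynomial (Polynomial k))
    (hEy : E.natDegree = d)
    (hEt : ∀ i, (E.coeff i).degree ≤ (h : WithBot ℕ))
    (f : PowerSeries k)
    (hroot : Polynomial.eval₂ (polyToSeries k) f E = 0)
    (hsimple : evalAt k f (Polynomial.derivative E) ≠ 0)
    (Λ : Fin p → LaurentSeries k → LaurentSeries k)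
    (hΛ : ∀ g : LaurentSeries k, g = ∑ r : Fin p, (tL k) ^ (r : ℕ) * (Λ r g) ^ p)
    (r : Fin p)
    (Q : Polynomial (Polynomial k))
    (hQt : ∀ i, (Q.coeff i).degree < (h : WithBot ℕ))
    (hQy : Q.degree < ((d - 1 : ℕ) : WithBot ℕ)) :
    ∃ Q' : Polynomial (Polynomial k),
      (∀ i, (Q'.coeff i).degree < (h : WithBot ℕ))
        ∧ Q'.degree < ((d - 1 : ℕ) : WithBot ℕ)
        ∧ Λ r (evalAt k f Q / evalAt k f (Polynomial.derivative E))
            = evalAt k f Q' / evalAt k f (Polynomial.derivative E) := by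
  have hp : p ≠ 0 := (Fact.out : p.Prime).ne_zero
  set G := digit p (p - 1) (Q * E ^ (p - 1))
  set e := evalAt k f (derivative E)
  have hGt : ∀ i, (G.coeff i).degree < ↑(h * p) := fun i => by
    have hhp : h * p = h + (p - 1) * h := by zify [Nat.one_le_iff_ne_zero.mpr hp]; ring
    rw [coeff_digit hp, hhp]
    exact degree_coeff_mul_lt hQt (degree_coeff_pow_le hEt (p - 1)) _
  have hGy : G.degree < ↑(d - 1) := degree_digit_lt hp (degree_mul_pow_sub_one_lt hp hEy.le hQy)
  have hroot' : E.eval₂ (polyToLaurent k) (HahnSeries.ofPowerSeries ℤ k f) = 0 := by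
    have := congrArg (HahnSeries.ofPowerSeries ℤ k) hroot
    rwa [hom_eval₂, map_zero] at this
  have hdecomp : evalAt k f Q / e
      = ∑ s ∈ range p, tL k ^ s * (evalAt k f (rootDigitCoeffs p s G) / e) ^ p := by
    refine div_eq_sum_mul_div_pow hp hsimple _ _ _ ?_
    simpa only [polyToLaurent_X, evalAt, e, G] using
      eval₂_mul_eval₂_derivative_pow_eq_sum _ hroot' Q
  refine ⟨rootDigitCoeffs p r G, fun i => ?_, (degree_rootDigitCoeffs_le _ _).trans_lt hGy, ?_⟩
  · rw [coeff_rootDigitCoeffs]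
    exact degree_rootDigit_lt (hGt i)
  · refine congrFun (sum_tL_pow_mul_pow_injective (a := fun s => Λ s (evalAt k f Q / e))
      (b := fun s => evalAt k f (rootDigitCoeffs p s G) / e) ?_) r
    rw [← hΛ, hdecomp]
    exact (Fin.sum_univ_eq_sum_range _ p).symm

/-- Let `k` be perfect of characteristic `p`, `E` irreducible
over `k(t)` of height `h` and degree `d`, with root `f ∈ k⟦t⟧` and
`E_y(t,f) ≠ 0`.  The subspace `{ Q(t,f)/E_y(t,f) : deg_t Q < h, deg_y Q ≤ d-2 }`
is stable under all section operators `Λ_r`: if `deg_t Q < h` and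
`deg_y Q ≤ d-2` (encoded as `deg_y Q < d-1`), then `Λ_r (Q(t,f)/E_y(t,f))` is
again of this form.  Here `Λ_r` are the section operators on `k((t))`,
characterized by `g = ∑_r t^r (Λ_r g)^p`. -/
theorem stability_degree_le_d_sub_two (k : Type*) [Field k] (p : ℕ) [Fact p.Prime]
    [CharP k p] [PerfectRing k p] (h d : ℕ) (hd : 1 ≤ d)
    (E : Polynomial (Polynomial k))
    (hirr : Irreducible (E.map (algebraMap (Polynomial k) (RatFunc k))))
    (hEy : E.natDegree = d)
    (hEt : ∀ i, (E.coeff i).degree ≤ (h : WithBot ℕ))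
    (f : PowerSeries k)
    (hroot : Polynomial.eval₂ (polyToSeries k) f E = 0)
    (hsimple : evalAt k f (Polynomial.derivative E) ≠ 0)
    (Λ : Fin p → LaurentSeries k → LaurentSeries k)
    (hΛ : ∀ g : LaurentSeries k, g = ∑ r : Fin p, (tL k) ^ (r : ℕ) * (Λ r g) ^ p)
    (r : Fin p)
    (Q : Polynomial (Polynomial k))
    (hQt : ∀ i, (Q.coeff i).degree < (h : WithBot ℕ))
    (hQy : Q.degree < ((d - 1 : ℕ) : WithBot ℕ)) :
    ∃ Q' : Polynomial (Polynomial k),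
      (∀ i, (Q'.coeff i).degree < (h : WithBot ℕ))
        ∧ Q'.degree < ((d - 1 : ℕ) : WithBot ℕ)
        ∧ Λ r (evalAt k f Q / evalAt k f (Polynomial.derivative E))
            = evalAt k f Q' / evalAt k f (Polynomial.derivative E) :=
  stability_degree_le_d_sub_two_general k p h d E hEy hEt f hroot hsimple Λ hΛ r Q hQt hQy
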